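/- arXiv:2105.01310 — 2 statements merged into one kernel-verified Lean document; each statement's English description precedes it below -/
import Mathlib

section
/- If m ≥ 4, then E[T] ≤ m · min{a_i·a_{i+1} : 1 ≤ i ≤ m−2}. -/
/-!
Fix adjacent gaps `i` and `j = i + 1`. A step changes the product `A_i A_j` by
`A_i s_j + A_j s_i + s_i s_j`; the step is independent of the past and uniform on the `m`
step vectors, whose coordinates sum to `0` and for which `∑ₖ s_i s_j = -1`. So before the first
tie the product drifts down by exactly `1 / m` per step in expectation, while it stays
nonnegative. Summing the drift, `(1 / m) ∑ₙ P(no tie up to time n) ≤ a_i a_j`, and the left side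
bounds `E[T] / m`.
-/

open MeasureTheory ProbabilityTheory
open scoped ENNReal

/-- The `m` possible step vectors of the competition process on the `m - 1` gaps
(0-indexed): `step m 0 = -e₀`, `step m k = e_{k-1} - e_k` for `0 < k < m - 1`, and
`step m (m-1) = e_{m-2}`. -/
def step (m : ℕ) (k : Fin m) : Fin (m - 1) → ℤ := fun j =>
  (if (j : ℕ) + 1 = (k : ℕ) then 1 else 0) - (if (j : ℕ) = (k : ℕ) then 1 else 0)

lemma abs_step_le_one (m : ℕ) (k : Fin m) (j : Fin (m - 1)) : |step m k j| ≤ 1 := by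
  unfold step; split_ifs <;> simp

lemma step_injective (m : ℕ) : Function.Injective (step m) := by
  intro k k' h
  by_contra hne
  wlog hlt : (k : ℕ) < k' generalizing k k'
  · exact this h.symm (Ne.symm hne) (by omega)
  have := congrFun h ⟨k, by omega⟩
  simp only [step] at this
  split_ifs at this <;> omega

lemma sum_step_apply (m : ℕ) (j : Fin (m - 1)) : ∑ k : Fin m, step m k j = 0 := by
  simp only [step, Finset.sum_sub_distrib]
  rw [Fin.sum_univ_eq_sum_range (fun k => if (j : ℕ) + 1 = k then (1 : ℤ) else 0),
    Fin.sum_univ_eq_sum_range (fun k => if (j : ℕ) = k then (1 : ℤ) else 0),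
    Finset.sum_ite_eq, Finset.sum_ite_eq, if_pos (by simp; omega), if_pos (by simp; omega),
    sub_self]

lemma sum_step_mul_step_succ (m : ℕ) (i j : Fin (m - 1)) (hij : (j : ℕ) = i + 1) :
    ∑ k : Fin m, step m k i * step m k j = -1 := by
  rw [Finset.sum_eq_single ⟨i + 1, by omega⟩]
  · simp only [step]; split_ifs <;> omega
  · intro k _ hk
    have : (k : ℕ) ≠ i + 1 := fun h => hk (Fin.ext h)
    simp only [step]; split_ifs <;> omega
  · simp

lemma Int.abs_le_abs_add_of_abs_sub_le_one {x : ℕ → ℤ} (h : ∀ l, |x (l + 1) - x l| ≤ 1) (n : ℕ) :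
    |x n| ≤ |x 0| + n := by
  induction n with
  | zero => simp
  | succ n ih =>
    have := abs_sub_abs_le_abs_sub (x (n + 1)) (x n)
    push_cast
    linarith [h n]

lemma Int.nonneg_of_forall_lt_ne_zero {x : ℕ → ℤ} (h0 : 0 ≤ x 0) (h : ∀ l, x l - 1 ≤ x (l + 1))
    {n : ℕ} (hne : ∀ l < n, x l ≠ 0) : 0 ≤ x n := by
  induction n with
  | zero => exact h0
  | succ n ih =>
    have := ih fun l hl => hne l (by omega)
    have := hne n (by omega)
    have := h n
    omega

section Uniform

variable {Ω β : Type*} [MeasurableSpace Ω] {μ : Measure Ω} [IsProbabilityMeasure μ]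
  [MeasurableSpace β] [MeasurableSingletonClass β] {m : ℕ} {X : Ω → β} {v : Fin m → β}

lemma ae_mem_range_of_uniform (hm : m ≠ 0) (hX : Measurable X) (hv : Function.Injective v)
    (hunif : ∀ k, μ (X ⁻¹' {v k}) = 1 / m) : ∀ᵐ ω ∂μ, X ω ∈ Set.range v := by
  have hrange : X ⁻¹' Set.range v = ⋃ k, X ⁻¹' {v k} := by ext; simp [eq_comm]
  refine (ae_mem_iff_measure_eq (hX (Set.finite_range v).measurableSet).nullMeasurableSet).2 ?_
  rw [hrange, measure_iUnion (fun k k' hk => (Set.disjoint_singleton.2 (hv.ne hk)).preimage X)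
    fun k => hX (measurableSet_singleton _), tsum_fintype, measure_univ]
  simp [hunif, ENNReal.mul_inv_cancel (Nat.cast_ne_zero.2 hm) (ENNReal.natCast_ne_top m)]

lemma comp_ae_eq_sum_indicator_of_uniform (hm : m ≠ 0) (hX : Measurable X)
    (hv : Function.Injective v) (hunif : ∀ k, μ (X ⁻¹' {v k}) = 1 / m) (g : β → ℝ) :
    (fun ω => g (X ω)) =ᵐ[μ] fun ω => ∑ k, (X ⁻¹' {v k}).indicator (fun _ => g (v k)) ω := by
  filter_upwards [ae_mem_range_of_uniform hm hX hv hunif] with ω ⟨k, hk⟩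
  rw [Finset.sum_eq_single k ?_ (by simp), Set.indicator_of_mem (by simp [hk]), hk]
  intro k' _ hk'
  exact Set.indicator_of_notMem (fun h : X ω = v k' => hk' (hv (hk.trans h)).symm) _

lemma integrable_comp_of_uniform (hm : m ≠ 0) (hX : Measurable X) (hv : Function.Injective v)
    (hunif : ∀ k, μ (X ⁻¹' {v k}) = 1 / m) (g : β → ℝ) : Integrable (fun ω => g (X ω)) μ :=
  (integrable_finsetSum _ fun k _ => (integrable_const (g (v k))).indicator
    (hX (measurableSet_singleton _))).congr
    (comp_ae_eq_sum_indicator_of_uniform hm hX hv hunif g).symm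

lemma integral_comp_of_uniform (hm : m ≠ 0) (hX : Measurable X) (hv : Function.Injective v)
    (hunif : ∀ k, μ (X ⁻¹' {v k}) = 1 / m) (g : β → ℝ) :
    ∫ ω, g (X ω) ∂μ = (∑ k, g (v k)) / m := by
  rw [integral_congr_ae (comp_ae_eq_sum_indicator_of_uniform hm hX hv hunif g),
    integral_finsetSum _ fun k _ => (integrable_const (g (v k))).indicator
      (hX (measurableSet_singleton _)), Finset.sum_div]
  refine Finset.sum_congr rfl fun k _ => ?_
  rw [integral_indicator_const _ (hX (measurableSet_singleton _)), measureReal_def, hunif]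
  simp [div_eq_inv_mul]

end Uniform

section Past

variable {Ω β : Type*} [MeasurableSpace β]

abbrev pastSigma (ξ : ℕ → Ω → β) (n : ℕ) : MeasurableSpace Ω :=
  ⨆ l ∈ Set.Iio n, MeasurableSpace.comap (ξ l) ‹_›

lemma measurable_pastSigma {ξ : ℕ → Ω → β} {l n : ℕ} (hl : l < n) :
    Measurable[pastSigma ξ n] (ξ l) :=
  Measurable.of_comap_le
    (le_iSup₂ (f := fun l (_ : l ∈ Set.Iio n) => MeasurableSpace.comap (ξ l) ‹_›) l hl)

lemma pastSigma_mono (ξ : ℕ → Ω → β) : Monotone (pastSigma ξ) :=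
  fun _ _ h => biSup_mono fun _ hl => lt_of_lt_of_le hl h

variable [MeasurableSpace Ω] {μ : Measure Ω}

lemma pastSigma_le {ξ : ℕ → Ω → β} (hξ : ∀ n, Measurable (ξ n)) (n : ℕ) :
    pastSigma ξ n ≤ ‹MeasurableSpace Ω› :=
  iSup₂_le fun l _ => (hξ l).comap_le

lemma ProbabilityTheory.iIndepFun.indepFun_pastSigma {ξ : ℕ → Ω → β}
    (hξ : ∀ n, Measurable (ξ n)) (hindep : iIndepFun ξ μ) {γ : Type*} [MeasurableSpace γ]
    {F : Ω → γ} {n : ℕ} (hF : Measurable[pastSigma ξ n] F) :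
    IndepFun F (ξ n) μ := by
  have h := indep_iSup_of_disjoint (fun l => (hξ l).comap_le) hindep
    (S := Set.Iio n) (T := {n}) (by simp)
  rw [iSup_singleton] at h
  exact (IndepFun_iff_Indep _ _ _).2 (indep_of_indep_of_le_left h hF.comap_le)

end Past

lemma lintegral_natCast_le_tsum_measure {Ω : Type*} [MeasurableSpace Ω] {μ : Measure Ω}
    {T : Ω → ℕ} {s : ℕ → Set Ω} (hs : ∀ n, MeasurableSet (s n)) (hT : ∀ ω n, n < T ω → ω ∈ s n) :
    ∫⁻ ω, (T ω : ℝ≥0∞) ∂μ ≤ ∑' n, μ (s n) := by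
  calc ∫⁻ ω, (T ω : ℝ≥0∞) ∂μ ≤ ∫⁻ ω, ∑' n, (s n).indicator 1 ω ∂μ := by
        refine lintegral_mono fun ω => ?_
        calc (T ω : ℝ≥0∞) = ∑ n ∈ Finset.range (T ω), (s n).indicator 1 ω := by
              rw [Finset.sum_congr rfl fun n hn => Set.indicator_of_mem
                (hT ω n (Finset.mem_range.1 hn)) _]
              simp
          _ ≤ _ := ENNReal.sum_le_tsum _
    _ = ∑' n, μ (s n) := by
        rw [lintegral_tsum fun n => (measurable_one.indicator (hs n)).aemeasurable]
        exact tsum_congr fun n => lintegral_indicator_one (hs n)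

lemma sum_range_le_of_add_le {W c : ℕ → ℝ} (hW : ∀ n, 0 ≤ W n) (h : ∀ n, W (n + 1) + c n ≤ W n)
    (n : ℕ) : ∑ l ∈ Finset.range n, c l ≤ W 0 := by
  suffices ∑ l ∈ Finset.range n, c l + W n ≤ W 0 by linarith [hW n]
  induction n with
  | zero => simp
  | succ n ih => rw [Finset.sum_range_succ]; linarith [h n]

section Walk

variable {Ω ι : Type*}

def walk (x₀ : ι → ℤ) (ξ : ℕ → Ω → ι → ℤ) : ℕ → Ω → ι → ℤ
  | 0 => fun _ => x₀
  | n + 1 => fun ω => walk x₀ ξ n ω + ξ n ω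

def noTieUntil [Fintype ι] (x₀ : ι → ℤ) (ξ : ℕ → Ω → ι → ℤ) (n : ℕ) : Set Ω :=
  {ω | ∀ l ≤ n, ∏ j, walk x₀ ξ l ω j ≠ 0}

lemma abs_walk_le {x₀ : ι → ℤ} {ξ : ℕ → Ω → ι → ℤ} {ω : Ω} (hξ : ∀ n j, |ξ n ω j| ≤ 1)
    (n : ℕ) (j : ι) : |walk x₀ ξ n ω j| ≤ |x₀ j| + n :=
  Int.abs_le_abs_add_of_abs_sub_le_one (x := fun n => walk x₀ ξ n ω j)
    (fun l => by simpa [walk] using hξ l j) n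

lemma walk_nonneg_of_mem_noTieUntil [Fintype ι] {x₀ : ι → ℤ} (hx₀ : 0 ≤ x₀)
    {ξ : ℕ → Ω → ι → ℤ} {ω : Ω} (hξ : ∀ n j, |ξ n ω j| ≤ 1) {n k : ℕ}
    (hω : ω ∈ noTieUntil x₀ ξ n) (hk : k ≤ n + 1) (j : ι) : 0 ≤ walk x₀ ξ k ω j :=
  Int.nonneg_of_forall_lt_ne_zero (x := fun n => walk x₀ ξ n ω j) (hx₀ j)
    (fun l => by have := (abs_le.1 (hξ l j)).1; simp only [walk, Pi.add_apply]; omega)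
    fun l hl => Finset.prod_ne_zero_iff.1 (hω l (by omega)) j (Finset.mem_univ j)

lemma measurable_walk_pastSigma (x₀ : ι → ℤ) (ξ : ℕ → Ω → ι → ℤ) (n : ℕ) :
    Measurable[pastSigma ξ n] (walk x₀ ξ n) := by
  induction n with
  | zero => exact measurable_const
  | succ n ih =>
    exact (ih.mono (pastSigma_mono ξ n.le_succ) le_rfl).add (measurable_pastSigma n.lt_succ_self)

lemma measurableSet_noTieUntil [Fintype ι] (x₀ : ι → ℤ) (ξ : ℕ → Ω → ι → ℤ) (n : ℕ) :
    MeasurableSet[pastSigma ξ n] (noTieUntil x₀ ξ n) := by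
  simp only [noTieUntil, Set.ofPred_forall]
  exact MeasurableSet.iInter fun l => MeasurableSet.iInter fun hl =>
    (measurable_walk_pastSigma x₀ ξ l).mono (pastSigma_mono ξ hl) le_rfl
      (MeasurableSet.of_discrete (s := {x : ι → ℤ | ∏ j, x j ≠ 0}))

end Walk

section UniformSteps

variable {Ω : Type*} [MeasurableSpace Ω] {μ : Measure Ω} [IsProbabilityMeasure μ] {m : ℕ}
  {ξ : ℕ → Ω → Fin (m - 1) → ℤ}

lemma ae_abs_le_one_of_uniform_step (hm : m ≠ 0) (hξ : ∀ n, Measurable (ξ n))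
    (hunif : ∀ n k, μ {ω | ξ n ω = step m k} = 1 / m) : ∀ᵐ ω ∂μ, ∀ n j, |ξ n ω j| ≤ 1 := by
  rw [ae_all_iff]
  intro n
  filter_upwards [ae_mem_range_of_uniform hm (hξ n) (step_injective m) (hunif n)] with ω ⟨k, hk⟩ j
  rw [← hk]
  exact abs_step_le_one m k j

lemma integrable_comp_walk (hm : m ≠ 0) (hξ : ∀ n, Measurable (ξ n))
    (hunif : ∀ n k, μ {ω | ξ n ω = step m k} = 1 / m) (x₀ : Fin (m - 1) → ℤ) (n : ℕ)
    (g : (Fin (m - 1) → ℤ) → ℝ) : Integrable (fun ω => g (walk x₀ ξ n ω)) μ := by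
  obtain ⟨C, hC⟩ := ((Set.Finite.pi fun j => Set.finite_Icc (-(|x₀ j| + n)) (|x₀ j| + n)).image
    fun x => ‖g x‖).bddAbove
  refine Integrable.of_bound (Measurable.of_discrete.comp ((measurable_walk_pastSigma x₀ ξ n).mono
    (pastSigma_le hξ n) le_rfl)).aestronglyMeasurable C ?_
  filter_upwards [ae_abs_le_one_of_uniform_step hm hξ hunif] with ω hω
  exact hC ⟨_, fun j _ => abs_le.1 (abs_walk_le hω n j), rfl⟩

lemma integral_mul_comp_step (hm : m ≠ 0) (hξ : ∀ n, Measurable (ξ n)) (hindep : iIndepFun ξ μ)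
    (hunif : ∀ n k, μ {ω | ξ n ω = step m k} = 1 / m) {n : ℕ} {F : Ω → ℝ}
    (hF : Measurable[pastSigma ξ n] F) (g : (Fin (m - 1) → ℤ) → ℝ) :
    ∫ ω, F ω * g (ξ n ω) ∂μ = (∫ ω, F ω ∂μ) * ((∑ k, g (step m k)) / m) := by
  rw [← integral_comp_of_uniform hm (hξ n) (step_injective m) (hunif n) g]
  exact ((hindep.indepFun_pastSigma hξ hF).comp measurable_id
    Measurable.of_discrete).integral_mul_eq_mul_integral
    (hF.mono (pastSigma_le hξ n) le_rfl).aestronglyMeasurable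
    (integrable_comp_of_uniform hm (hξ n) (step_injective m) (hunif n) g).aestronglyMeasurable

lemma integrable_mul_comp_step (hm : m ≠ 0) (hξ : ∀ n, Measurable (ξ n)) (hindep : iIndepFun ξ μ)
    (hunif : ∀ n k, μ {ω | ξ n ω = step m k} = 1 / m) {n : ℕ} {F : Ω → ℝ}
    (hF : Measurable[pastSigma ξ n] F) (hFi : Integrable F μ) (g : (Fin (m - 1) → ℤ) → ℝ) :
    Integrable (fun ω => F ω * g (ξ n ω)) μ :=
  ((hindep.indepFun_pastSigma hξ hF).comp measurable_id Measurable.of_discrete).integrable_mul hFi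
    (integrable_comp_of_uniform hm (hξ n) (step_injective m) (hunif n) g)

lemma setIntegral_walk_mul_succ_sub (hm : m ≠ 0) (hξ : ∀ n, Measurable (ξ n))
    (hindep : iIndepFun ξ μ) (hunif : ∀ n k, μ {ω | ξ n ω = step m k} = 1 / m)
    {i j : Fin (m - 1)} (hij : (j : ℕ) = i + 1) (x₀ : Fin (m - 1) → ℤ) {n : ℕ} {S : Set Ω}
    (hS : MeasurableSet[pastSigma ξ n] S) :
    ∫ ω in S, ((walk x₀ ξ (n + 1) ω i : ℝ) * walk x₀ ξ (n + 1) ω j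
      - (walk x₀ ξ n ω i : ℝ) * walk x₀ ξ n ω j) ∂μ = -μ.real S / m := by
  have hF : ∀ l, Measurable[pastSigma ξ n] (S.indicator fun ω => (walk x₀ ξ n ω l : ℝ)) :=
    fun l => ((Measurable.of_discrete (f := fun x : Fin (m - 1) → ℤ => (x l : ℝ))).comp
      (measurable_walk_pastSigma x₀ ξ n)).indicator hS
  have hFi : ∀ l, Integrable (S.indicator fun ω => (walk x₀ ξ n ω l : ℝ)) μ := fun l =>
    (integrable_comp_walk hm hξ hunif x₀ n fun x => (x l : ℝ)).indicator (pastSigma_le hξ n S hS)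
  have h1 : Measurable[pastSigma ξ n] (S.indicator fun _ => (1 : ℝ)) :=
    measurable_const.indicator hS
  have h1i : Integrable (S.indicator fun _ => (1 : ℝ)) μ :=
    (integrable_const 1).indicator (pastSigma_le hξ n S hS)
  have hsplit : ∀ ω, (S.indicator fun ω => (walk x₀ ξ (n + 1) ω i : ℝ) * walk x₀ ξ (n + 1) ω j
      - (walk x₀ ξ n ω i : ℝ) * walk x₀ ξ n ω j) ω =
        S.indicator (fun ω => (walk x₀ ξ n ω i : ℝ)) ω * (ξ n ω j : ℝ)
        + S.indicator (fun ω => (walk x₀ ξ n ω j : ℝ)) ω * (ξ n ω i : ℝ)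
        + S.indicator (fun _ => (1 : ℝ)) ω * ((ξ n ω i : ℝ) * ξ n ω j) := by
    intro ω
    by_cases hω : ω ∈ S <;> simp [hω, walk]; ring
  have hFξi := integrable_mul_comp_step hm hξ hindep hunif (hF i) (hFi i) fun x => (x j : ℝ)
  have hFξj := integrable_mul_comp_step hm hξ hindep hunif (hF j) (hFi j) fun x => (x i : ℝ)
  have h1ξ := integrable_mul_comp_step hm hξ hindep hunif h1 h1i fun x => (x i : ℝ) * x j
  rw [← integral_indicator (pastSigma_le hξ n S hS), integral_congr_ae (.of_forall hsplit),
    integral_add (f := fun ω => _ + _) (hFξi.add hFξj) h1ξ, integral_add hFξi hFξj,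
    integral_mul_comp_step hm hξ hindep hunif (hF i) fun x => (x j : ℝ),
    integral_mul_comp_step hm hξ hindep hunif (hF j) fun x => (x i : ℝ),
    integral_mul_comp_step hm hξ hindep hunif h1 fun x => (x i : ℝ) * x j]
  simp only [← Int.cast_sum, ← Int.cast_mul, sum_step_apply, sum_step_mul_step_succ m i j hij]
  rw [integral_indicator_const _ (pastSigma_le hξ n S hS)]
  push_cast
  ring

lemma ae_restrict_noTieUntil_walk_mul_nonneg (hm : m ≠ 0) (hξ : ∀ n, Measurable (ξ n))
    (hunif : ∀ n k, μ {ω | ξ n ω = step m k} = 1 / m) {x₀ : Fin (m - 1) → ℤ} (hx₀ : 0 ≤ x₀)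
    (i j : Fin (m - 1)) {n k : ℕ} (hk : k ≤ n + 1) :
    ∀ᵐ ω ∂μ.restrict (noTieUntil x₀ ξ n), 0 ≤ (walk x₀ ξ k ω i : ℝ) * walk x₀ ξ k ω j := by
  rw [ae_restrict_iff' (pastSigma_le hξ n _ (measurableSet_noTieUntil x₀ ξ n))]
  filter_upwards [ae_abs_le_one_of_uniform_step hm hξ hunif] with ω hω hmem
  exact mul_nonneg (Int.cast_nonneg (walk_nonneg_of_mem_noTieUntil hx₀ hω hmem hk i))
    (Int.cast_nonneg (walk_nonneg_of_mem_noTieUntil hx₀ hω hmem hk j))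

lemma setIntegral_noTieUntil_succ_add_le (hm : m ≠ 0) (hξ : ∀ n, Measurable (ξ n))
    (hindep : iIndepFun ξ μ) (hunif : ∀ n k, μ {ω | ξ n ω = step m k} = 1 / m)
    {i j : Fin (m - 1)} (hij : (j : ℕ) = i + 1) {x₀ : Fin (m - 1) → ℤ} (hx₀ : 0 ≤ x₀) (n : ℕ) :
    ∫ ω in noTieUntil x₀ ξ (n + 1), (walk x₀ ξ (n + 1) ω i : ℝ) * walk x₀ ξ (n + 1) ω j ∂μ
        + μ.real (noTieUntil x₀ ξ n) / m
      ≤ ∫ ω in noTieUntil x₀ ξ n, (walk x₀ ξ n ω i : ℝ) * walk x₀ ξ n ω j ∂μ := by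
  have hint := fun k => integrable_comp_walk hm hξ hunif x₀ k fun x => (x i : ℝ) * x j
  have hincr := setIntegral_walk_mul_succ_sub hm hξ hindep hunif hij x₀
    (measurableSet_noTieUntil x₀ ξ n)
  rw [integral_sub (hint (n + 1)).integrableOn (hint n).integrableOn, neg_div] at hincr
  have hsub : noTieUntil x₀ ξ (n + 1) ⊆ noTieUntil x₀ ξ n := fun ω hω l hl => hω l (by omega)
  have hmono := setIntegral_mono_set (hint (n + 1)).integrableOn
    (ae_restrict_noTieUntil_walk_mul_nonneg hm hξ hunif hx₀ i j le_rfl) hsub.eventuallyLE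
  linarith

lemma tsum_measure_noTieUntil_le (hξ : ∀ n, Measurable (ξ n)) (hindep : iIndepFun ξ μ)
    (hunif : ∀ n k, μ {ω | ξ n ω = step m k} = 1 / m) (a : Fin (m - 1) → ℕ)
    {i j : Fin (m - 1)} (hij : (j : ℕ) = i + 1) :
    ∑' n, μ (noTieUntil (fun j => (a j : ℤ)) ξ n) ≤ m * (a i * a j) := by
  have hm : m ≠ 0 := by have := i.isLt; omega
  have hx₀ : 0 ≤ fun j => (a j : ℤ) := fun j => Int.natCast_nonneg _
  set S := noTieUntil (fun j => (a j : ℤ)) ξ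
  set W := fun n => ∫ ω in S n,
    (walk (fun j => (a j : ℤ)) ξ n ω i : ℝ) * walk (fun j => (a j : ℤ)) ξ n ω j ∂μ
  have hW : ∀ n, 0 ≤ W n := fun n =>
    integral_nonneg_of_ae (ae_restrict_noTieUntil_walk_mul_nonneg hm hξ hunif hx₀ i j n.le_succ)
  have hW₀ : W 0 ≤ a i * a j := by
    simp only [W, walk, setIntegral_const, smul_eq_mul]
    push_cast
    exact mul_le_of_le_one_left (by positivity) measureReal_le_one
  refine ENNReal.tsum_le_of_sum_range_le fun N => ?_
  have hsum := sum_range_le_of_add_le hW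
    (setIntegral_noTieUntil_succ_add_le hm hξ hindep hunif hij hx₀) N
  rw [← Finset.sum_div, div_le_iff₀ (by positivity)] at hsum
  calc ∑ n ∈ Finset.range N, μ (S n) = ENNReal.ofReal (∑ n ∈ Finset.range N, μ.real (S n)) := by
        rw [ENNReal.ofReal_sum_of_nonneg fun n _ => measureReal_nonneg]
        simp [ofReal_measureReal]
    _ ≤ ENNReal.ofReal ((m * (a i * a j) : ℕ)) := by
        refine ENNReal.ofReal_le_ofReal ?_
        push_cast
        nlinarith [(by positivity : (0 : ℝ) ≤ m)]
    _ = m * (a i * a j) := by simp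

end UniformSteps

theorem stmt_1_general (m : ℕ) (hm : 4 ≤ m)
{Ω : Type*} [MeasurableSpace Ω] (μ : Measure Ω) [IsProbabilityMeasure μ]
    (a : Fin (m - 1) → ℕ)
    (ξ : ℕ → Ω → (Fin (m - 1) → ℤ))
    (hmeas : ∀ n, Measurable (ξ n))
    (hindep : iIndepFun ξ μ)
    (hunif : ∀ n (k : Fin m), μ {ω | ξ n ω = step m k} = 1 / m)
    (A : ℕ → Ω → (Fin (m - 1) → ℤ))
    (hA0 : ∀ ω j, A 0 ω j = (a j : ℤ))
    (hA : ∀ n ω, A (n + 1) ω = A n ω + ξ n ω)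
    (T : Ω → ℕ)
    (hT : ∀ ω, T ω = sInf {n | (∏ j, A n ω j) = 0}) :
    ∫⁻ ω, (T ω : ℝ≥0∞) ∂μ
      ≤ (m : ℝ≥0∞) * ⨅ (i : Fin (m - 1)) (j : Fin (m - 1)) (_ : (j : ℕ) = (i : ℕ) + 1),
          ((a i : ℝ≥0∞) * (a j : ℝ≥0∞)) := by
  obtain rfl : A = walk (fun j => (a j : ℤ)) ξ := by
    funext n ω
    induction n with
    | zero => exact funext (hA0 ω)
    | succ n ih => rw [hA, ih, walk]
  -- not an equivalence: `T ω = sInf ∅ = 0` when no tie ever occurs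
  have hT_lt : ∀ ω n, n < T ω → ω ∈ noTieUntil (fun j => (a j : ℤ)) ξ n := fun ω n hn l hl =>
    Nat.notMem_of_lt_sInf ((hT ω) ▸ lt_of_le_of_lt hl hn)
  calc ∫⁻ ω, (T ω : ℝ≥0∞) ∂μ ≤ ∑' n, μ (noTieUntil (fun j => (a j : ℤ)) ξ n) :=
        lintegral_natCast_le_tsum_measure
          (fun n => pastSigma_le hmeas n _ (measurableSet_noTieUntil _ ξ n)) hT_lt
    _ ≤ ⨅ (i : Fin (m - 1)) (j : Fin (m - 1)) (_ : (j : ℕ) = (i : ℕ) + 1),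
          (m : ℝ≥0∞) * ((a i : ℝ≥0∞) * (a j : ℝ≥0∞)) :=
        le_iInf₂ fun i j => le_iInf (tsum_measure_noTieUntil_le hmeas hindep hunif a)
    _ = _ := by
        simp_rw [ENNReal.mul_iInf_of_ne (Nat.cast_ne_zero.2 (by omega)) (ENNReal.natCast_ne_top m)]

/-- For `m ≥ 4` teams, the expected value of the first tie time `T`
is at most `m` times the minimum of the products of adjacent initial gaps. -/
theorem stmt_1 (m : ℕ) (hm : 4 ≤ m)
{Ω : Type*} [MeasurableSpace Ω] (μ : Measure Ω) [IsProbabilityMeasure μ]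
    (a : Fin (m - 1) → ℕ) (ha : ∀ k, 0 < a k)
    (ξ : ℕ → Ω → (Fin (m - 1) → ℤ))
    (hmeas : ∀ n, Measurable (ξ n))
    (hindep : iIndepFun ξ μ)
    (hunif : ∀ n (k : Fin m), μ {ω | ξ n ω = step m k} = 1 / m)
    (A : ℕ → Ω → (Fin (m - 1) → ℤ))
    (hA0 : ∀ ω j, A 0 ω j = (a j : ℤ))
    (hA : ∀ n ω, A (n + 1) ω = A n ω + ξ n ω)
    (T : Ω → ℕ)
    (hT : ∀ ω, T ω = sInf {n | (∏ j, A n ω j) = 0}) :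
    ∫⁻ ω, (T ω : ℝ≥0∞) ∂μ
      ≤ (m : ℝ≥0∞) * ⨅ (i : Fin (m - 1)) (j : Fin (m - 1)) (_ : (j : ℕ) = (i : ℕ) + 1),
          ((a i : ℝ≥0∞) * (a j : ℝ≥0∞)) :=
  stmt_1_general m hm μ a ξ hmeas hindep hunif A hA0 hA T hT
end

section
/- With T_n = min{T, n}, the limit lim_{n→∞} E[A(T_n)·B(T_n)] = 0 holds. -/
/-!
Each step has mean zero and `E[ξ₁ ξ₂] = -1/3`, so `A B + n/3` is a martingale. Writing `alive n`
for the event `n < T`, this gives `E[A_n B_n; alive n] = a b - (1/3) ∑_{k<n} P(alive k)`; as the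
left side is at least `P(alive n)`, the series `∑ P(T > k)` converges. Hence `T < ∞` almost surely
and `E[A(T ∧ n) B(T ∧ n)] = E[A_n B_n; alive n]`. To see that this tends to `0`, bound
`A B ≤ (A + B)² / 4` and split `A_n + B_n` at an earlier time `m`: the value at time `m` is bounded,
and since the steps of `A + B` have mean `0` and variance `2/3`, the second moment of its increment
from `m` to `n` on `alive n` is at most `(2/3) ∑_{m ≤ k < n} P(alive k)`, a tail of the convergent
series.
-/

open MeasureTheory ProbabilityTheory Filter Finset Topology

section Independence

variable {Ω β : Type*} {m mΩ : MeasurableSpace Ω} {μ : Measure Ω} [MeasurableSpace β]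

abbrev past (X : ℕ → Ω → β) (n : ℕ) : MeasurableSpace Ω :=
  ⨆ i < n, MeasurableSpace.comap (X i) ‹_›

theorem past_le {X : ℕ → Ω → β} (hX : ∀ i, Measurable (X i)) (n : ℕ) : past X n ≤ mΩ :=
  iSup₂_le fun i _ ↦ (hX i).comap_le

theorem measurable_past {X : ℕ → Ω → β} {i n : ℕ} (h : i < n) : Measurable[past X n] (X i) :=
  Measurable.of_comap_le (le_iSup₂ (f := fun j (_ : j < n) ↦ MeasurableSpace.comap (X j) ‹_›) i h)

theorem ProbabilityTheory.iIndepFun.indep_past {X : ℕ → Ω → β} (hX : ∀ i, Measurable (X i))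
    (hind : iIndepFun X μ) (n : ℕ) :
    Indep (past X n) (MeasurableSpace.comap (X n) ‹_›) μ := by
  have h := indep_iSup_of_disjoint (fun i ↦ (hX i).comap_le) hind.iIndep
    (Set.disjoint_singleton_right.2 (lt_irrefl n) : Disjoint (Set.Iio n) {n})
  exact indep_of_indep_of_le_right h (le_iSup₂ (f := fun j (_ : j ∈ ({n} : Set ℕ)) ↦
    MeasurableSpace.comap (X j) ‹_›) n rfl)

variable [MeasurableSingletonClass β]

theorem ae_mem_of_sum_measure_fiber_eq_one [IsProbabilityMeasure μ]
    {X : Ω → β} (hX : Measurable X) {s : Finset β}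
    (hs : ∑ u ∈ s, μ (X ⁻¹' {u}) = 1) : ∀ᵐ ω ∂μ, X ω ∈ s := by
  rw [sum_measure_preimage_singleton s fun u _ ↦ hX (measurableSet_singleton u)] at hs
  exact (ae_mem_iff_measure_eq (hX s.measurableSet).nullMeasurableSet).2 (by simpa using hs)

theorem integral_apply_eq_integral_sum_of_indep [IsFiniteMeasure μ] {X : Ω → β}
    (hX : Measurable X) (hind : Indep m (MeasurableSpace.comap X ‹_›) μ) {s : Finset β}
    (hs : ∀ᵐ ω ∂μ, X ω ∈ s) {F : Ω → β → ℝ} (hFm : ∀ u ∈ s, Measurable[m] (F · u))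
    (hFi : ∀ u ∈ s, Integrable (F · u) μ) :
    ∫ ω, F ω (X ω) ∂μ = ∫ ω, ∑ u ∈ s, μ.real (X ⁻¹' {u}) * F ω u ∂μ := by
  have hfiber : ∀ u, MeasurableSet (X ⁻¹' {u}) := fun u ↦ hX (measurableSet_singleton u)
  have hsum : (fun ω ↦ F ω (X ω)) =ᵐ[μ] fun ω ↦ ∑ u ∈ s, (X ⁻¹' {u}).indicator (F · u) ω := by
    filter_upwards [hs] with ω hω
    rw [Finset.sum_eq_single_of_mem (f := fun u ↦ (X ⁻¹' {u}).indicator (F · u) ω) (X ω) hω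
      fun u _ hu ↦ Set.indicator_of_notMem (Ne.symm hu) _]
    simp
  rw [integral_congr_ae hsum, integral_finsetSum _ fun u hu ↦ (hFi u hu).indicator (hfiber u),
    integral_finsetSum _ fun u hu ↦ (hFi u hu).const_mul _]
  refine Finset.sum_congr rfl fun u hu ↦ ?_
  have hprod : (X ⁻¹' {u}).indicator (F · u) = fun ω ↦ F ω u * (X ⁻¹' {u}).indicator 1 ω := by
    ext ω; by_cases h : ω ∈ X ⁻¹' {u} <;> simp [h]
  have hfib : MeasurableSet[MeasurableSpace.comap X ‹_›] (X ⁻¹' {u}) :=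
    ⟨{u}, measurableSet_singleton u, rfl⟩
  have hindep : IndepFun (F · u) ((X ⁻¹' {u}).indicator (1 : Ω → ℝ)) μ := by
    rw [IndepFun_iff_Indep]
    refine indep_of_indep_of_le_right (indep_of_indep_of_le_left hind (hFm u hu).comap_le) ?_
    exact (Measurable.indicator (m := MeasurableSpace.comap X ‹_›) (f := fun _ ↦ (1 : ℝ))
      measurable_const hfib).comap_le
  rw [hprod, hindep.integral_fun_mul_eq_mul_integral (hFi u hu).1
    (aestronglyMeasurable_one.indicator (hfiber u)), integral_indicator_one (hfiber u),
    integral_const_mul, mul_comm]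

end Independence

theorem abs_le_abs_zero_add_of_abs_sub_le_one {x : ℕ → ℤ} (h : ∀ k, |x (k + 1) - x k| ≤ 1)
    (n : ℕ) : |x n| ≤ |x 0| + n := by
  induction n with
  | zero => simp
  | succ n ih =>
    push_cast
    linarith [abs_sub_abs_le_abs_sub (x (n + 1)) (x n), h n]

open Classical in
theorem apply_min_sInf_eq_ite {M : Type*} [Zero M] {p : ℕ → M} (h : ∃ k, p k = 0) (n : ℕ) :
    p (min (sInf {k | p k = 0}) n) = if ∀ k ≤ n, p k ≠ 0 then p n else 0 := by
  have hT : p (sInf {k | p k = 0}) = 0 := Nat.sInf_mem h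
  split_ifs with hn
  · rw [min_eq_right (le_of_not_gt fun hlt ↦ hn _ hlt.le hT)]
  · push Not at hn
    obtain ⟨k, hkn, hk⟩ := hn
    rwa [min_eq_left ((Nat.sInf_le hk).trans hkn)]

theorem sum_Ico_le_tsum_nat_add {f : ℕ → ℝ} (hf0 : ∀ n, 0 ≤ f n) (hf : Summable f) (m n : ℕ) :
    ∑ k ∈ Ico m n, f k ≤ ∑' k, f (k + m) := by
  rw [Finset.sum_Ico_eq_sum_range]
  simp_rw [add_comm m]
  exact ((summable_nat_add_iff m).2 hf).sum_le_tsum _ fun k _ ↦ hf0 _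

theorem tendsto_zero_of_le_mul_add_sum_Ico {y f C : ℕ → ℝ} (hf0 : ∀ n, 0 ≤ f n) (hf : Summable f)
    (hy : ∀ n, 0 ≤ y n) (h : ∀ m n, m ≤ n → y n ≤ C m * f n + ∑ k ∈ Ico m n, f k) :
    Tendsto y atTop (𝓝 0) := by
  rw [Metric.tendsto_atTop]
  intro ε hε
  obtain ⟨m, hm⟩ := ((tendsto_sum_nat_add f).eventually (gt_mem_nhds (half_pos hε))).exists
  have hCf : Tendsto (fun n ↦ C m * f n) atTop (𝓝 0) := by
    simpa using hf.tendsto_atTop_zero.const_mul (C m)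
  obtain ⟨N, hN⟩ := eventually_atTop.1 (hCf.eventually (gt_mem_nhds (half_pos hε)))
  refine ⟨max m N, fun n hn ↦ ?_⟩
  rw [Real.dist_eq, sub_zero, abs_of_nonneg (hy n)]
  linarith [h m n (le_of_max_le_left hn), hN n (le_of_max_le_right hn),
    sum_Ico_le_tsum_nat_add hf0 hf m n]

def LatticeWalk.steps : Finset (ℤ × ℤ) := {(-1, 0), (1, -1), (0, 1)}

theorem LatticeWalk.abs_le_one_of_mem_steps {u : ℤ × ℤ} (hu : u ∈ steps) :
    |u.1| ≤ 1 ∧ |u.2| ≤ 1 := by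
  simp only [LatticeWalk.steps, Finset.mem_insert, Finset.mem_singleton] at hu
  rcases hu with rfl | rfl | rfl <;> norm_num

structure LatticeWalk (Ω : Type*) [MeasurableSpace Ω] where
  μ : Measure Ω
  [isProbabilityMeasure : IsProbabilityMeasure μ]
  a : ℕ
  b : ℕ
  ξ : ℕ → Ω → ℤ × ℤ
  measurable_ξ : ∀ n, Measurable (ξ n)
  iIndepFun_ξ : iIndepFun ξ μ
  measure_ξ_eq : ∀ n, ∀ u ∈ LatticeWalk.steps, μ {ω | ξ n ω = u} = 1 / 3
  A : ℕ → Ω → ℤ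
  B : ℕ → Ω → ℤ
  A_zero : ∀ ω, A 0 ω = a
  B_zero : ∀ ω, B 0 ω = b
  A_succ : ∀ n ω, A (n + 1) ω = A n ω + (ξ n ω).1
  B_succ : ∀ n ω, B (n + 1) ω = B n ω + (ξ n ω).2

namespace LatticeWalk

variable {Ω : Type*} [MeasurableSpace Ω] (W : LatticeWalk Ω)

instance : IsProbabilityMeasure W.μ := W.isProbabilityMeasure

def alive (n : ℕ) : Set Ω := {ω | ∀ k ≤ n, W.A k ω * W.B k ω ≠ 0}

theorem alive_antitone : Antitone W.alive :=
  fun _ _ hmn _ hω k hk ↦ hω k (hk.trans hmn)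

theorem alive_succ (n : ℕ) :
    W.alive (n + 1) = W.alive n ∩ {ω | W.A (n + 1) ω * W.B (n + 1) ω ≠ 0} := by
  ext ω
  exact ⟨fun h ↦ ⟨fun k hk ↦ h k (hk.trans n.le_succ), h _ le_rfl⟩,
    fun ⟨h, h'⟩ k hk ↦ (Nat.le_succ_iff.1 hk).elim (h k) fun e ↦ e ▸ h'⟩

theorem ae_mem_steps : ∀ᵐ ω ∂W.μ, ∀ k, W.ξ k ω ∈ steps := by
  refine ae_all_iff.2 fun k ↦ ae_mem_of_sum_measure_fiber_eq_one (W.measurable_ξ k) ?_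
  rw [show ∑ u ∈ steps, W.μ (W.ξ k ⁻¹' {u}) = ∑ u ∈ steps, 1 / 3 from
    Finset.sum_congr rfl fun u hu ↦ W.measure_ξ_eq k u hu]
  simp [steps, ENNReal.mul_inv_cancel]

theorem abs_A_le {ω : Ω} (hω : ∀ k, W.ξ k ω ∈ steps) (n : ℕ) : |(W.A n ω : ℝ)| ≤ W.a + n := by
  have h := abs_le_abs_zero_add_of_abs_sub_le_one (x := (W.A · ω))
    (fun k ↦ by simpa [W.A_succ] using (abs_le_one_of_mem_steps (hω k)).1) n
  rw [W.A_zero] at h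
  exact_mod_cast h

theorem abs_B_le {ω : Ω} (hω : ∀ k, W.ξ k ω ∈ steps) (n : ℕ) : |(W.B n ω : ℝ)| ≤ W.b + n := by
  have h := abs_le_abs_zero_add_of_abs_sub_le_one (x := (W.B · ω))
    (fun k ↦ by simpa [W.B_succ] using (abs_le_one_of_mem_steps (hω k)).2) n
  rw [W.B_zero] at h
  exact_mod_cast h

theorem pos_of_mem_alive {ω : Ω} (hω : ∀ k, W.ξ k ω ∈ steps) {n : ℕ} (h : ω ∈ W.alive n) :
    0 < W.A n ω ∧ 0 < W.B n ω := by
  induction n with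
  | zero =>
    obtain ⟨hA, hB⟩ := mul_ne_zero_iff.1 (h 0 le_rfl)
    simp only [W.A_zero, W.B_zero, ne_eq, Nat.cast_eq_zero] at hA hB ⊢
    omega
  | succ n ih =>
    obtain ⟨hA, hB⟩ := ih (W.alive_antitone n.le_succ h)
    obtain ⟨hA', hB'⟩ := mul_ne_zero_iff.1 (h (n + 1) le_rfl)
    have hu := abs_le_one_of_mem_steps (hω n)
    rw [abs_le, abs_le] at hu
    simp only [W.A_succ, W.B_succ] at hA' hB' ⊢
    omega

theorem measurable_A_B_past {m n : ℕ} (h : m ≤ n) :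
    Measurable[past W.ξ n] (W.A m) ∧ Measurable[past W.ξ n] (W.B m) := by
  induction m with
  | zero =>
    rw [funext W.A_zero, funext W.B_zero]
    exact ⟨measurable_const, measurable_const⟩
  | succ m ih =>
    obtain ⟨hA, hB⟩ := ih (by omega)
    have hξ := measurable_past (X := W.ξ) (show m < n by omega)
    rw [funext (W.A_succ m), funext (W.B_succ m)]
    exact ⟨hA.add (measurable_fst.comp hξ), hB.add (measurable_snd.comp hξ)⟩

theorem measurableSet_alive_past (n : ℕ) : MeasurableSet[past W.ξ n] (W.alive n) := by
  have h : W.alive n = ⋂ k ∈ Set.Iic n, {ω | W.A k ω * W.B k ω ≠ 0} := by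
    ext ω; simp [alive]
  rw [h]
  refine MeasurableSet.biInter (Set.to_countable _) fun k hk ↦ ?_
  obtain ⟨hA, hB⟩ := W.measurable_A_B_past hk
  exact (hA.mul hB) (measurableSet_singleton 0).compl

theorem integral_apply_ξ (n : ℕ) {F : Ω → ℤ × ℤ → ℝ} (hFm : ∀ u, Measurable[past W.ξ n] (F · u))
    (hFi : ∀ u, Integrable (F · u) W.μ) :
    ∫ ω, F ω (W.ξ n ω) ∂W.μ = ∫ ω, (∑ u ∈ steps, F ω u) / 3 ∂W.μ := by
  rw [integral_apply_eq_integral_sum_of_indep (W.measurable_ξ n)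
    (W.iIndepFun_ξ.indep_past W.measurable_ξ n) (W.ae_mem_steps.mono fun ω hω ↦ hω n)
    (fun u _ ↦ hFm u) fun u _ ↦ hFi u]
  refine integral_congr_ae (Eventually.of_forall fun ω ↦ ?_)
  simp only [Finset.sum_div]
  refine Finset.sum_congr rfl fun u hu ↦ ?_
  rw [measureReal_def, show W.μ (W.ξ n ⁻¹' {u}) = 1 / 3 from W.measure_ξ_eq n u hu]
  simp [div_eq_inv_mul]

theorem measurable_A (n : ℕ) : Measurable (W.A n) :=
  (W.measurable_A_B_past le_rfl).1.mono (past_le W.measurable_ξ n) le_rfl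

theorem measurable_B (n : ℕ) : Measurable (W.B n) :=
  (W.measurable_A_B_past le_rfl).2.mono (past_le W.measurable_ξ n) le_rfl

theorem measurableSet_alive (n : ℕ) : MeasurableSet (W.alive n) :=
  past_le W.measurable_ξ n _ (W.measurableSet_alive_past n)

theorem integrable_indicator_alive_one (n : ℕ) :
    Integrable ((W.alive n).indicator (1 : Ω → ℝ)) W.μ :=
  (integrable_const (1 : ℝ)).indicator (W.measurableSet_alive n)

theorem integrable_of_bound {f : Ω → ℝ} (hf : Measurable f) (C : ℝ)
    (hC : ∀ ω, (∀ k, W.ξ k ω ∈ steps) → ‖f ω‖ ≤ C) : Integrable f W.μ :=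
  .of_bound hf.aestronglyMeasurable C (W.ae_mem_steps.mono hC)

theorem integrable_indicator_mul {s : Set Ω} (hs : MeasurableSet s) (n : ℕ) (u : ℤ × ℤ) :
    Integrable (s.indicator fun ω ↦ (W.A n ω + u.1 : ℝ) * (W.B n ω + u.2)) W.μ := by
  have := W.measurable_A n
  have := W.measurable_B n
  refine W.integrable_of_bound (Measurable.indicator (by fun_prop) hs)
    ((W.a + n + |(u.1 : ℝ)|) * (W.b + n + |(u.2 : ℝ)|)) fun ω hω ↦ ?_
  refine (norm_indicator_le_norm_self _ _).trans ?_
  rw [Real.norm_eq_abs, abs_mul]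
  exact mul_le_mul ((abs_add_le _ _).trans (by linarith [W.abs_A_le hω n]))
    ((abs_add_le _ _).trans (by linarith [W.abs_B_le hω n])) (abs_nonneg _) (by positivity)

theorem integrable_indicator_sq {s : Set Ω} (hs : MeasurableSet s) (m n : ℕ) (c : ℝ) :
    Integrable (s.indicator fun ω ↦ ((W.A n ω : ℝ) + W.B n ω - W.A m ω - W.B m ω + c) ^ 2)
      W.μ := by
  have := W.measurable_A n
  have := W.measurable_B n
  have := W.measurable_A m
  have := W.measurable_B m
  refine W.integrable_of_bound (Measurable.indicator (by fun_prop) hs)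
    ((W.a + n + (W.b + n) + (W.a + m) + (W.b + m) + |c|) ^ 2) fun ω hω ↦ ?_
  refine (norm_indicator_le_norm_self _ _).trans ?_
  rw [Real.norm_eq_abs, abs_pow]
  refine pow_le_pow_left₀ (abs_nonneg _) ?_ 2
  have := abs_add_le ((W.A n ω : ℝ) + W.B n ω - W.A m ω - W.B m ω) c
  have := abs_sub ((W.A n ω : ℝ) + W.B n ω - W.A m ω) (W.B m ω)
  have := abs_sub ((W.A n ω : ℝ) + W.B n ω) (W.A m ω)
  have := abs_add_le (W.A n ω : ℝ) (W.B n ω)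
  linarith [W.abs_A_le hω n, W.abs_B_le hω n, W.abs_A_le hω m, W.abs_B_le hω m]

noncomputable def meanProduct (n : ℕ) : ℝ :=
  ∫ ω, (W.alive n).indicator (fun ω ↦ (W.A n ω : ℝ) * W.B n ω) ω ∂W.μ

theorem integrable_indicator_alive_mul (n : ℕ) :
    Integrable ((W.alive n).indicator fun ω ↦ (W.A n ω : ℝ) * W.B n ω) W.μ := by
  simpa using W.integrable_indicator_mul (W.measurableSet_alive n) n 0

theorem indicator_alive_succ (n : ℕ) :
    (W.alive (n + 1)).indicator (fun ω ↦ (W.A (n + 1) ω : ℝ) * W.B (n + 1) ω) =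
      (W.alive n).indicator (fun ω ↦ (W.A (n + 1) ω : ℝ) * W.B (n + 1) ω) := by
  have h : {ω | W.A (n + 1) ω * W.B (n + 1) ω ≠ 0} =
      Function.support (fun ω ↦ (W.A (n + 1) ω : ℝ) * W.B (n + 1) ω) := by
    ext ω; simp
  rw [W.alive_succ, h, Set.indicator_inter_support]

theorem meanProduct_succ (n : ℕ) :
    W.meanProduct (n + 1) = W.meanProduct n - W.μ.real (W.alive n) / 3 := by
  set F : Ω → ℤ × ℤ → ℝ := fun ω u ↦
    (W.alive n).indicator (fun ω ↦ (W.A n ω + u.1 : ℝ) * (W.B n ω + u.2)) ω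
  have hstep : W.meanProduct (n + 1) = ∫ ω, F ω (W.ξ n ω) ∂W.μ := by
    rw [meanProduct, indicator_alive_succ]
    congr 1 with ω
    by_cases h : ω ∈ W.alive n <;> simp [F, h, W.A_succ, W.B_succ]
  have havg : ∀ ω, (∑ u ∈ steps, F ω u) / 3 =
      (W.alive n).indicator (fun ω ↦ (W.A n ω : ℝ) * W.B n ω) ω -
        (W.alive n).indicator 1 ω / 3 := by
    intro ω
    by_cases h : ω ∈ W.alive n <;> simp [F, h, steps]
    ring
  obtain ⟨hA, hB⟩ := W.measurable_A_B_past (le_refl n)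
  rw [hstep, W.integral_apply_ξ n (F := F)
    (fun u ↦ Measurable.indicator (by fun_prop) (W.measurableSet_alive_past n))
    (fun u ↦ W.integrable_indicator_mul (W.measurableSet_alive n) n u)]
  simp_rw [havg]
  rw [integral_sub (W.integrable_indicator_alive_mul n)
    ((W.integrable_indicator_alive_one n).div_const 3),
    integral_div, integral_indicator_one (W.measurableSet_alive n), meanProduct]

theorem meanProduct_zero : W.meanProduct 0 = W.a * W.b := by
  have h : (W.alive 0).indicator (fun ω ↦ (W.A 0 ω : ℝ) * W.B 0 ω) = fun _ ↦ (W.a : ℝ) * W.b := by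
    ext ω
    by_cases h : ω ∈ W.alive 0
    · simp [h, W.A_zero, W.B_zero]
    · have hab : (W.a : ℤ) * W.b = 0 := by
        by_contra hne
        exact h fun k hk ↦ by rwa [Nat.le_zero.1 hk, W.A_zero, W.B_zero]
      rw [Set.indicator_of_notMem h]
      exact_mod_cast hab.symm
  simp [meanProduct, h]

theorem meanProduct_eq (n : ℕ) :
    W.meanProduct n = W.a * W.b - (∑ k ∈ range n, W.μ.real (W.alive k)) / 3 := by
  induction n with
  | zero => simp [meanProduct_zero]
  | succ n ih => rw [meanProduct_succ, ih, sum_range_succ]; ring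

theorem measureReal_alive_le_meanProduct (n : ℕ) : W.μ.real (W.alive n) ≤ W.meanProduct n := by
  rw [← integral_indicator_one (W.measurableSet_alive n)]
  refine integral_mono_ae (W.integrable_indicator_alive_one n)
    (W.integrable_indicator_alive_mul n) ?_
  filter_upwards [W.ae_mem_steps] with ω hω
  by_cases h : ω ∈ W.alive n
  · obtain ⟨hA, hB⟩ := W.pos_of_mem_alive hω h
    have : (1 : ℤ) ≤ W.A n ω * W.B n ω := one_le_mul_of_one_le_of_one_le hA hB
    simp only [Set.indicator_of_mem h, Pi.one_apply]
    exact_mod_cast this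
  · simp [h]

theorem summable_measureReal_alive : Summable fun n ↦ W.μ.real (W.alive n) :=
  summable_of_sum_range_le (c := 3 * (W.a * W.b)) (fun _ ↦ measureReal_nonneg) fun n ↦ by
    linarith [W.meanProduct_eq n, W.measureReal_alive_le_meanProduct n,
      measureReal_nonneg (μ := W.μ) (s := W.alive n)]

noncomputable def sqIncrement (m n : ℕ) : ℝ :=
  ∫ ω, (W.alive n).indicator
    (fun ω ↦ ((W.A n ω : ℝ) + W.B n ω - W.A m ω - W.B m ω) ^ 2) ω ∂W.μ

theorem sqIncrement_succ_le {m n : ℕ} (hmn : m ≤ n) :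
    W.sqIncrement m (n + 1) ≤ W.sqIncrement m n + 2 / 3 * W.μ.real (W.alive n) := by
  set F : Ω → ℤ × ℤ → ℝ := fun ω u ↦ (W.alive n).indicator
    (fun ω ↦ ((W.A n ω : ℝ) + W.B n ω - W.A m ω - W.B m ω + (u.1 + u.2 : ℤ)) ^ 2) ω
  have hle : W.sqIncrement m (n + 1) ≤ ∫ ω, F ω (W.ξ n ω) ∂W.μ := by
    have hF : (fun ω ↦ F ω (W.ξ n ω)) = (W.alive n).indicator
        (fun ω ↦ ((W.A (n + 1) ω : ℝ) + W.B (n + 1) ω - W.A m ω - W.B m ω) ^ 2) := by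
      ext ω
      by_cases h : ω ∈ W.alive n <;> simp [F, h, W.A_succ, W.B_succ]
      ring
    rw [hF]
    refine integral_mono
      (by simpa using W.integrable_indicator_sq (W.measurableSet_alive (n + 1)) m (n + 1) 0)
      (by simpa using W.integrable_indicator_sq (W.measurableSet_alive n) m (n + 1) 0) ?_
    exact Set.indicator_le_indicator_of_subset (W.alive_antitone n.le_succ) fun _ ↦ sq_nonneg _
  have havg : ∀ ω, (∑ u ∈ steps, F ω u) / 3 = (W.alive n).indicator
      (fun ω ↦ ((W.A n ω : ℝ) + W.B n ω - W.A m ω - W.B m ω) ^ 2) ω +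
        2 / 3 * (W.alive n).indicator 1 ω := by
    intro ω
    by_cases h : ω ∈ W.alive n <;> simp [F, h, steps]
    ring
  obtain ⟨hA, hB⟩ := W.measurable_A_B_past (le_refl n)
  obtain ⟨hA', hB'⟩ := W.measurable_A_B_past hmn
  rw [W.integral_apply_ξ n (F := F)
    (fun u ↦ Measurable.indicator (by fun_prop) (W.measurableSet_alive_past n))
    (fun u ↦ by simpa using W.integrable_indicator_sq (W.measurableSet_alive n) m n _)] at hle
  simp_rw [havg] at hle
  rwa [integral_add (by simpa using W.integrable_indicator_sq (W.measurableSet_alive n) m n 0)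
    ((W.integrable_indicator_alive_one n).const_mul _),
    integral_const_mul, integral_indicator_one (W.measurableSet_alive n)] at hle

theorem sqIncrement_le {m n : ℕ} (hmn : m ≤ n) :
    W.sqIncrement m n ≤ 2 / 3 * ∑ k ∈ Ico m n, W.μ.real (W.alive k) := by
  induction n, hmn using Nat.le_induction with
  | base => simp [sqIncrement]
  | succ n hmn ih =>
    rw [sum_Ico_succ_top hmn, mul_add]
    linarith [W.sqIncrement_succ_le hmn]

theorem meanProduct_le (m n : ℕ) :
    W.meanProduct n ≤
      (W.a + W.b + 2 * m) ^ 2 / 2 * W.μ.real (W.alive n) + W.sqIncrement m n / 2 := by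
  set D : Ω → ℝ := fun ω ↦ (W.A n ω : ℝ) + W.B n ω - W.A m ω - W.B m ω
  have hD : Integrable ((W.alive n).indicator fun ω ↦ D ω ^ 2) W.μ := by
    simpa using W.integrable_indicator_sq (W.measurableSet_alive n) m n 0
  have hle : W.meanProduct n ≤ ∫ ω, (W.a + W.b + 2 * m) ^ 2 / 2 * (W.alive n).indicator 1 ω +
      (W.alive n).indicator (fun ω ↦ D ω ^ 2) ω / 2 ∂W.μ := by
    refine integral_mono_ae (W.integrable_indicator_alive_mul n)
      (((W.integrable_indicator_alive_one n).const_mul _).add (hD.div_const 2)) ?_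
    filter_upwards [W.ae_mem_steps] with ω hω
    by_cases h : ω ∈ W.alive n
    · simp only [Set.indicator_of_mem h, Pi.one_apply, mul_one]
      -- `A B ≤ (A + B)² / 4 ≤ ((A_m + B_m)² + D²) / 2`
      have hx := abs_le.1 ((abs_add_le (W.A m ω : ℝ) (W.B m ω)).trans
        (add_le_add (W.abs_A_le hω m) (W.abs_B_le hω m)))
      nlinarith [sq_nonneg ((W.A n ω : ℝ) - W.B n ω), sq_nonneg ((W.A m ω : ℝ) + W.B m ω - D ω)]
    · simp [h]
  rwa [integral_add ((W.integrable_indicator_alive_one n).const_mul _) (hD.div_const 2),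
    integral_const_mul, integral_indicator_one (W.measurableSet_alive n), integral_div] at hle

theorem tendsto_meanProduct : Tendsto W.meanProduct atTop (𝓝 0) := by
  refine tendsto_zero_of_le_mul_add_sum_Ico (C := fun m ↦ (W.a + W.b + 2 * m) ^ 2 / 2)
    (fun _ ↦ measureReal_nonneg) W.summable_measureReal_alive
    (fun n ↦ measureReal_nonneg.trans (W.measureReal_alive_le_meanProduct n)) fun m n hmn ↦ ?_
  have := sum_nonneg fun k (_ : k ∈ Ico m n) ↦ measureReal_nonneg (μ := W.μ) (s := W.alive k)
  linarith [W.meanProduct_le m n, W.sqIncrement_le hmn]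

theorem ae_exists_mul_eq_zero : ∀ᵐ ω ∂W.μ, ∃ k, W.A k ω * W.B k ω = 0 := by
  have h : W.μ.real (⋂ n, W.alive n) = 0 :=
    le_antisymm (ge_of_tendsto' W.summable_measureReal_alive.tendsto_atTop_zero
      fun n ↦ measureReal_mono (Set.iInter_subset _ n)) measureReal_nonneg
  rw [measureReal_eq_zero_iff] at h
  filter_upwards [measure_eq_zero_iff_ae_notMem.1 h] with ω hω
  by_contra hne
  push Not at hne
  exact hω (Set.mem_iInter.2 fun n k _ ↦ hne k)

end LatticeWalk

theorem stmt_9_general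
{Ω : Type*} [MeasurableSpace Ω] (μ : Measure Ω) [IsProbabilityMeasure μ]
    (a b : ℕ)
    (ξ : ℕ → Ω → ℤ × ℤ)
    (hmeas : ∀ n, Measurable (ξ n))
    (hindep : iIndepFun ξ μ)
    (hunif : ∀ n, ∀ v ∈ ({(-1, 0), (1, -1), (0, 1)} : Set (ℤ × ℤ)),
      μ {ω | ξ n ω = v} = 1 / 3)
    (A B : ℕ → Ω → ℤ)
    (hA0 : ∀ ω, A 0 ω = (a : ℤ)) (hB0 : ∀ ω, B 0 ω = (b : ℤ))
    (hA : ∀ n ω, A (n + 1) ω = A n ω + (ξ n ω).1)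
    (hB : ∀ n ω, B (n + 1) ω = B n ω + (ξ n ω).2)
(T : Ω → ℕ)
    (hT : ∀ ω, T ω = sInf {n | A n ω * B n ω = 0}) :
    Tendsto (fun n : ℕ => ∫ ω, ((A (min (T ω) n) ω * B (min (T ω) n) ω : ℤ) : ℝ) ∂μ)
      atTop (nhds 0) := by
  let W : LatticeWalk Ω :=
    { μ, a, b, ξ, A, B, measurable_ξ := hmeas, iIndepFun_ξ := hindep,
      measure_ξ_eq := fun n u hu ↦ hunif n u (by simpa [LatticeWalk.steps] using hu),
      A_zero := hA0, B_zero := hB0, A_succ := hA, B_succ := hB }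
  refine W.tendsto_meanProduct.congr fun n ↦ integral_congr_ae ?_
  filter_upwards [W.ae_exists_mul_eq_zero] with ω hω
  rw [hT, apply_min_sInf_eq_ite hω n]
  split_ifs with hn
  · rw [Set.indicator_of_mem (s := W.alive n) hn, Int.cast_mul]
  · rw [Set.indicator_of_notMem (s := W.alive n) hn, Int.cast_zero]

/-- With `T_n = min (T, n)`, one has `E[A(T_n) * B(T_n)] → 0` as `n → ∞`. -/
theorem stmt_9
{Ω : Type*} [MeasurableSpace Ω] (μ : Measure Ω) [IsProbabilityMeasure μ]
    (a b : ℕ) (ha : 0 < a) (hb : 0 < b)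
    (ξ : ℕ → Ω → ℤ × ℤ)
    (hmeas : ∀ n, Measurable (ξ n))
    (hindep : iIndepFun ξ μ)
    (hunif : ∀ n, ∀ v ∈ ({(-1, 0), (1, -1), (0, 1)} : Set (ℤ × ℤ)),
      μ {ω | ξ n ω = v} = 1 / 3)
    (A B : ℕ → Ω → ℤ)
    (hA0 : ∀ ω, A 0 ω = (a : ℤ)) (hB0 : ∀ ω, B 0 ω = (b : ℤ))
    (hA : ∀ n ω, A (n + 1) ω = A n ω + (ξ n ω).1)
    (hB : ∀ n ω, B (n + 1) ω = B n ω + (ξ n ω).2)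
(T : Ω → ℕ)
    (hT : ∀ ω, T ω = sInf {n | A n ω * B n ω = 0}) :
    Tendsto (fun n : ℕ => ∫ ω, ((A (min (T ω) n) ω * B (min (T ω) n) ω : ℤ) : ℝ) ∂μ)
      atTop (nhds 0) :=
  stmt_9_general μ a b ξ hmeas hindep hunif A B hA0 hB0 hA hB T hT
end
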